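/- arXiv:0912.4551 — 8 statements merged into one kernel-verified Lean document; each statement's English description precedes it below -/
import Mathlib

section
/- Let G be a monoid acting on a set A such that the map G × A → A × A, (g,x) ↦ (g•x, x), is bijective, and suppose there exists an element a ∈ A. Then the map G → A, g ↦ g•a, is a bijection, and G is a group (every element of G has a two-sided inverse). -/
/-- Let `G` be a monoid acting on a set `A` such that the map
`G × A → A × A, (g,x) ↦ (g•x, x)` is bijective, and suppose there exists an element
`a ∈ A`.  Then the map `G → A, g ↦ g•a` is a bijection, and `G` is a group
(every element of `G` has a two-sided inverse). -/
theorem stmt0 {G : Type*} [Monoid G] {A : Type*} [MulAction G A]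
    (h : Function.Bijective (fun p : G × A => ((p.1 • p.2 : A), p.2)))
    (a : A) :
    Function.Bijective (fun g : G => g • a) ∧
      ∀ g : G, ∃ g' : G, g' * g = 1 ∧ g * g' = 1 := by
  have key : ∀ b : A, Function.Bijective (fun g : G => g • b) := by
    intro b
    constructor
    · intro g g' hg
      have : ((g, b) : G × A) = (g', b) := h.1 (by simpa using hg)
      exact (Prod.mk.injEq ..).mp this |>.1
    · intro x
      obtain ⟨⟨g, y⟩, hgy⟩ := h.2 (x, b)
      obtain ⟨h1, h2⟩ := Prod.mk.injEq .. |>.mp hgy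
      exact ⟨g, by rw [← h2]; exact h1⟩
  have linv : ∀ g : G, ∃ g' : G, g' * g = 1 := by
    intro g
    obtain ⟨g', hg'⟩ := (key (g • a)).2 a
    refine ⟨g', (key a).1 ?_⟩
    simp only [mul_smul, one_smul]
    exact hg'
  refine ⟨key a, fun g => ?_⟩
  obtain ⟨g', hg'⟩ := linv g
  obtain ⟨g'', hg''⟩ := linv g'
  refine ⟨g', hg', ?_⟩
  calc g * g' = (g'' * g') * (g * g') := by rw [hg'', one_mul]
    _ = g'' * (g' * g) * g' := by group
    _ = 1 := by rw [hg', mul_one, hg'']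
end

section
/- Let (A,q) be a nonempty heap. Let ≈ be the equivalence relation on A × A generated by the relation (q(x,y,z), z) ~ (x,y) for all x,y,z ∈ A, and let G be the quotient set (A × A)/≈ with [x,y] the class of (x,y). Then the operation [x,y]·[z,w] := [q(x,y,z), w] is well-defined and makes G a group, with identity element [a,a] for any a ∈ A (all such classes coincide) and with [x,y]⁻¹ = [y,x]. -/
/-- Let `(A,q)` be a nonempty heap.  Let `≈` be the equivalence relation on
`A × A` generated by `(q x y z, z) ~ (x, y)`, and let `G` be the quotient.  Then the
operation `[x,y]·[z,w] := [q x y z, w]` is well defined and makes `G` a group, with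
identity element `[a,a]` for any `a : A` (all such classes coincide) and with
`[x,y]⁻¹ = [y,x]`. -/
theorem stmt2 {A : Type*} (hA : Nonempty A) (q : A → A → A → A)
    (H1 : ∀ v w x y z, q (q v w x) y z = q v w (q x y z))
    (H2 : ∀ x y, q x y y = x)
    (H3 : ∀ x y, q x x y = y) :
    ∃ mul : Quotient (Relation.EqvGen.setoid
          (fun p p' : A × A => ∃ x y z, p = (q x y z, z) ∧ p' = (x, y))) →
        Quotient (Relation.EqvGen.setoid
          (fun p p' : A × A => ∃ x y z, p = (q x y z, z) ∧ p' = (x, y))) →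
        Quotient (Relation.EqvGen.setoid
          (fun p p' : A × A => ∃ x y z, p = (q x y z, z) ∧ p' = (x, y))),
      (∀ x y z w : A, mul (Quotient.mk _ (x, y)) (Quotient.mk _ (z, w))
          = Quotient.mk _ (q x y z, w)) ∧
      (∀ g h k, mul (mul g h) k = mul g (mul h k)) ∧
      (∀ a b : A, (Quotient.mk _ (a, a) : Quotient (Relation.EqvGen.setoid
          (fun p p' : A × A => ∃ x y z, p = (q x y z, z) ∧ p' = (x, y))))
          = Quotient.mk _ (b, b)) ∧
      (∀ (a : A) (g), mul (Quotient.mk _ (a, a)) g = g ∧ mul g (Quotient.mk _ (a, a)) = g) ∧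
      (∀ (a : A) (x y : A), mul (Quotient.mk _ (x, y)) (Quotient.mk _ (y, x))
            = Quotient.mk _ (a, a) ∧
          mul (Quotient.mk _ (y, x)) (Quotient.mk _ (x, y)) = Quotient.mk _ (a, a)) := by
  set r := fun p p' : A × A => ∃ x y z, p = (q x y z, z) ∧ p' = (x, y) with hr
  set s := Relation.EqvGen.setoid r with hs
  -- the function before quotienting
  have key : ∀ (p₁ p₂ q₁ q₂ : A × A), Relation.EqvGen r p₁ q₁ → Relation.EqvGen r p₂ q₂ →
      (Quotient.mk s (q p₁.1 p₁.2 p₂.1, p₂.2)) = Quotient.mk s (q q₁.1 q₁.2 q₂.1, q₂.2) := by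
    have left : ∀ (p₁ q₁ p₂ : A × A), Relation.EqvGen r p₁ q₁ →
        (Quotient.mk s (q p₁.1 p₁.2 p₂.1, p₂.2)) = Quotient.mk s (q q₁.1 q₁.2 p₂.1, p₂.2) := by
      intro p₁ q₁ p₂ h
      induction h with
      | rel a b hab =>
        obtain ⟨x, y, z, ha, hb⟩ := hab
        subst ha; subst hb
        simp only [H1, H3]
      | refl => rfl
      | symm _ _ _ ih => exact ih.symm
      | trans _ _ _ _ _ ih1 ih2 => exact ih1.trans ih2
    have right : ∀ (p₁ p₂ q₂ : A × A), Relation.EqvGen r p₂ q₂ →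
        (Quotient.mk s (q p₁.1 p₁.2 p₂.1, p₂.2)) = Quotient.mk s (q p₁.1 p₁.2 q₂.1, q₂.2) := by
      intro p₁ p₂ q₂ h
      induction h with
      | rel a b hab =>
        obtain ⟨x, y, z, ha, hb⟩ := hab
        subst ha; subst hb
        apply Quotient.sound
        exact Relation.EqvGen.rel _ _ ⟨q p₁.1 p₁.2 x, y, z, by rw [H1], rfl⟩
      | refl => rfl
      | symm _ _ _ ih => exact ih.symm
      | trans _ _ _ _ _ ih1 ih2 => exact ih1.trans ih2
    intro p₁ p₂ q₁ q₂ h1 h2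
    exact (left p₁ q₁ p₂ h1).trans (right q₁ p₂ q₂ h2)
  refine ⟨Quotient.lift₂ (fun p p' => Quotient.mk s (q p.1 p.2 p'.1, p'.2))
    (fun p₁ p₂ q₁ q₂ h1 h2 => key p₁ p₂ q₁ q₂ h1 h2), ?_, ?_, ?_, ?_, ?_⟩
  · intro x y z w; rfl
  · intro g h k
    induction g using Quotient.inductionOn with | h p =>
    induction h using Quotient.inductionOn with | h p' =>
    induction k using Quotient.inductionOn with | h p'' =>
    show Quotient.mk s _ = Quotient.mk s _
    simp only [H1]
  · intro a b
    apply Quotient.sound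
    exact Relation.EqvGen.rel _ _ ⟨b, b, a, by rw [H3], rfl⟩
  · intro a g
    induction g using Quotient.inductionOn with | h p =>
    constructor
    · show Quotient.mk s _ = _
      simp only [H3]
    · show Quotient.mk s _ = _
      exact Quotient.sound (Relation.EqvGen.rel _ _ ⟨p.1, p.2, a, rfl, rfl⟩)
  · intro a x y
    constructor
    · show Quotient.mk s (q x y y, x) = _
      rw [H2]
      exact Quotient.sound (Relation.EqvGen.rel _ _ ⟨a, a, x, by rw [H3], rfl⟩)
    · show Quotient.mk s (q y x x, y) = _
      rw [H2]
      exact Quotient.sound (Relation.EqvGen.rel _ _ ⟨a, a, y, by rw [H3], rfl⟩)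
end

section
/- Let (A,q) be a nonempty heap and let G = (A × A)/≈ be the group of the previous construction (≈ generated by (q(x,y,z), z) ~ (x,y), multiplication [x,y]·[z,w] = [q(x,y,z), w]). Then [x,y]•z := q(x,y,z) is a well-defined action of the group G on A, and A is a G-torsor for this action: the map G × A → A × A, (g,z) ↦ (g•z, z), is bijective. -/
/-- Let `(A,q)` be a nonempty heap and let `G = (A × A)/≈` be the group
of the previous construction (`≈` generated by `(q x y z, z) ~ (x,y)`, multiplication
`[x,y]·[z,w] = [q x y z, w]`).  Then `[x,y] • z := q x y z` is a well-defined action of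
the group `G` on `A`, and `A` is a `G`-torsor for this action: the map
`G × A → A × A, (g,z) ↦ (g•z, z)` is bijective. -/
theorem stmt3 {A : Type*} (hA : Nonempty A) (q : A → A → A → A)
    (H1 : ∀ v w x y z, q (q v w x) y z = q v w (q x y z))
    (H2 : ∀ x y, q x y y = x)
    (H3 : ∀ x y, q x x y = y) :
    ∃ (mul : Quotient (Relation.EqvGen.setoid
          (fun p p' : A × A => ∃ x y z, p = (q x y z, z) ∧ p' = (x, y))) →
        Quotient (Relation.EqvGen.setoid
          (fun p p' : A × A => ∃ x y z, p = (q x y z, z) ∧ p' = (x, y))) →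
        Quotient (Relation.EqvGen.setoid
          (fun p p' : A × A => ∃ x y z, p = (q x y z, z) ∧ p' = (x, y))))
      (act : Quotient (Relation.EqvGen.setoid
          (fun p p' : A × A => ∃ x y z, p = (q x y z, z) ∧ p' = (x, y))) → A → A),
      (∀ x y z w : A, mul (Quotient.mk _ (x, y)) (Quotient.mk _ (z, w))
          = Quotient.mk _ (q x y z, w)) ∧
      (∀ x y z : A, act (Quotient.mk _ (x, y)) z = q x y z) ∧
      (∀ (g h) (z : A), act (mul g h) z = act g (act h z)) ∧
      (∀ (a : A) (z : A), act (Quotient.mk _ (a, a)) z = z) ∧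
      Function.Bijective (fun p : (Quotient (Relation.EqvGen.setoid
          (fun p p' : A × A => ∃ x y z, p = (q x y z, z) ∧ p' = (x, y)))) × A =>
        (act p.1 p.2, p.2)) := by
  obtain ⟨a0⟩ := hA
  have key : ∀ p p' : A × A,
      Relation.EqvGen (fun p p' : A × A => ∃ x y z, p = (q x y z, z) ∧ p' = (x, y)) p p' →
      (fun c => q p.1 p.2 c) = (fun c => q p'.1 p'.2 c) := by
    intro p p' h
    induction h with
    | rel p p' h =>
      obtain ⟨x, y, z, rfl, rfl⟩ := h
      funext c
      simp [H1, H3]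
    | refl => rfl
    | symm _ _ _ ih => exact ih.symm
    | trans _ _ _ _ _ ih1 ih2 => exact ih1.trans ih2
  let act : Quotient (Relation.EqvGen.setoid
      (fun p p' : A × A => ∃ x y z, p = (q x y z, z) ∧ p' = (x, y))) → A → A :=
    Quotient.lift (fun p => (fun c => q p.1 p.2 c)) key
  have hact : ∀ x y z : A, act (Quotient.mk _ (x, y)) z = q x y z := fun _ _ _ => rfl
  refine ⟨fun g h => Quotient.mk _ (act g (act h a0), a0), act, ?_, hact, ?_, ?_, ?_, ?_⟩
  · intro x y z w
    show Quotient.mk _ (q x y (q z w a0), a0) = Quotient.mk _ (q x y z, w)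
    rw [← H1]
    exact Quotient.sound (Relation.EqvGen.rel _ _ ⟨q x y z, w, a0, rfl, rfl⟩)
  · intro g h z
    induction g using Quotient.ind with
    | _ p =>
      induction h using Quotient.ind with
      | _ p' =>
        obtain ⟨x, y⟩ := p
        obtain ⟨u, v⟩ := p'
        show q (q x y (q u v a0)) a0 z = q x y (q u v z)
        rw [H1, H1, H3]
  · intro a z
    exact H3 a z
  · intro ⟨g, z⟩ ⟨g', z'⟩ hEq
    simp only [Prod.mk.injEq] at hEq
    obtain ⟨h1, rfl⟩ := hEq
    refine Prod.ext ?_ rfl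
    induction g using Quotient.ind with
    | _ p =>
      induction g' using Quotient.ind with
      | _ p' =>
        obtain ⟨x, y⟩ := p
        obtain ⟨u, v⟩ := p'
        have h1' : q x y z = q u v z := h1
        have e1 : Quotient.mk (Relation.EqvGen.setoid
            (fun p p' : A × A => ∃ x y z, p = (q x y z, z) ∧ p' = (x, y))) (x, y)
            = Quotient.mk _ (q x y z, z) :=
          (Quotient.sound (Relation.EqvGen.rel _ _ ⟨x, y, z, rfl, rfl⟩)).symm
        have e2 : Quotient.mk (Relation.EqvGen.setoid
            (fun p p' : A × A => ∃ x y z, p = (q x y z, z) ∧ p' = (x, y))) (u, v)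
            = Quotient.mk _ (q u v z, z) :=
          (Quotient.sound (Relation.EqvGen.rel _ _ ⟨u, v, z, rfl, rfl⟩)).symm
        simp only []
        rw [e1, e2, h1']
  · intro ⟨u, v⟩
    refine ⟨⟨Quotient.mk _ (u, v), v⟩, ?_⟩
    exact Prod.ext (H2 u v) rfl
end

section
/- Let A be a herd in a braided monoidal category C with reflexive coequalizers preserved by tensoring, and let ϖ : A ⊗ A ⟶ H be the coequalizer of σ and τ. Then there exists a unique morphism μ : H ⊗ H ⟶ H such that μ ∘ (ϖ ⊗ ϖ) = ϖ ∘ (q ⊗ 1_{A⊗A}) : A⊗⁴ ⟶ H, and this μ is associative: μ ∘ (μ ⊗ 1) = μ ∘ (1 ⊗ μ) (up to associator). -/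
/-! The multiplication `q ⊗ 1` on `A ⊗ A` descends along `ϖ ⊗ ϖ` one factor at a time.
On the left factor, para-associativity and the unit law `q ∘ (δ ⊗ 1) = ε ⊗ 1` turn `σ` into `τ`;
on the right factor, para-associativity rewrites `(q ⊗ 1) ∘ (1 ⊗ σ)` as `σ` after `q`, which `ϖ`
identifies with `τ` after `q`. Associativity of `μ` is then inherited from that of `q ⊗ 1` (again
para-associativity), because `(ϖ ⊗ ϖ) ⊗ ϖ` is epi; for its middle factor the braiding moves `ϖ`
to a side where tensoring preserves the coequalizer. -/

open CategoryTheory MonoidalCategory Category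

universe v u

variable {C : Type u} [Category.{v} C] [MonoidalCategory C] [BraidedCategory C]

/-- The braiding of the first two factors of a right-nested triple tensor product. -/
def swap3 (X Y Z : C) : X ⊗ Y ⊗ Z ⟶ Y ⊗ X ⊗ Z :=
  (α_ X Y Z).inv ≫ ((β_ X Y).hom ▷ Z) ≫ (α_ Y X Z).hom

/-- A herd in a braided monoidal category `C`: a comonoid `A` together with a
comonoid morphism `q : A ⊗ A° ⊗ A ⟶ A` satisfying para-associativity and the
two unit laws. -/
structure Herd (C : Type u) [Category.{v} C] [MonoidalCategory C] [BraidedCategory C] where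
  A : C
  del : A ⟶ A ⊗ A
  eps : A ⟶ 𝟙_ C
  coassoc : del ≫ (del ▷ A) ≫ (α_ A A A).hom = del ≫ (A ◁ del)
  counit_left : del ≫ (eps ▷ A) ≫ (λ_ A).hom = 𝟙 A
  counit_right : del ≫ (A ◁ eps) ≫ (ρ_ A).hom = 𝟙 A
  q : A ⊗ A ⊗ A ⟶ A
  q_counit : q ≫ eps = (eps ⊗ₘ eps ⊗ₘ eps) ≫ (𝟙_ C ◁ (λ_ (𝟙_ C)).hom) ≫ (λ_ (𝟙_ C)).hom
  q_comul : q ≫ del =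
    (del ⊗ₘ (del ≫ (β_ A A).hom) ⊗ₘ del) ≫
      (α_ A A ((A ⊗ A) ⊗ (A ⊗ A))).hom ≫ (A ◁ (A ◁ (α_ A A (A ⊗ A)).hom)) ≫
      (A ◁ swap3 A A (A ⊗ A ⊗ A)) ≫
      (A ◁ (A ◁ (A ◁ swap3 A A A))) ≫
      (A ◁ (A ◁ swap3 A A (A ⊗ A))) ≫
      (A ◁ (α_ A A (A ⊗ A ⊗ A)).inv) ≫ (α_ A (A ⊗ A) (A ⊗ A ⊗ A)).inv ≫
      (q ⊗ₘ q)
  q_assoc : (A ◁ (α_ A A (A ⊗ A)).inv) ≫ (α_ A (A ⊗ A) (A ⊗ A)).inv ≫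
      (q ▷ (A ⊗ A)) ≫ q = (A ◁ (A ◁ q)) ≫ q
  q_unit_right : (A ◁ del) ≫ q = (A ◁ eps) ≫ (ρ_ A).hom
  q_unit_left : (del ▷ A) ≫ (α_ A A A).hom ≫ q = (eps ▷ A) ≫ (λ_ A).hom

/-- `σ = (q ⊗ 1) ∘ (1 ⊗ 1 ⊗ δ) : A⊗³ ⟶ A ⊗ A`. -/
def herdSigma (h : Herd C) : h.A ⊗ h.A ⊗ h.A ⟶ h.A ⊗ h.A :=
  (h.A ◁ (h.A ◁ h.del)) ≫ (h.A ◁ (α_ h.A h.A h.A).inv) ≫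
    (α_ h.A (h.A ⊗ h.A) h.A).inv ≫ (h.q ▷ h.A)

/-- `τ = 1 ⊗ 1 ⊗ ε : A⊗³ ⟶ A ⊗ A`. -/
def herdTau (h : Herd C) : h.A ⊗ h.A ⊗ h.A ⟶ h.A ⊗ h.A :=
  (h.A ◁ (h.A ◁ h.eps)) ≫ (h.A ◁ (ρ_ h.A).hom)

/-- The positive braid on `A⊗⁴` with underlying permutation `1,3,4,2`. -/
def c1342 (h : Herd C) : h.A ⊗ h.A ⊗ h.A ⊗ h.A ⟶ h.A ⊗ h.A ⊗ h.A ⊗ h.A :=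
  (h.A ◁ swap3 h.A h.A h.A) ≫ (h.A ◁ (h.A ◁ (β_ h.A h.A).hom))

namespace CategoryTheory.MonoidalCategory

variable {C : Type u} [Category.{v} C] [MonoidalCategory C]

theorem assoc_of_tensorHom_comp_eq {Y Q : C} {p : Y ⟶ Q} [Epi ((p ⊗ₘ p) ⊗ₘ p)]
    {F : Y ⊗ Y ⟶ Y} {m : Q ⊗ Q ⟶ Q}
    (hm : (p ⊗ₘ p) ≫ m = F ≫ p) (hF : (F ▷ Y) ≫ F = (α_ Y Y Y).hom ≫ (Y ◁ F) ≫ F) :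
    (m ▷ Q) ≫ m = (α_ Q Q Q).hom ≫ (Q ◁ m) ≫ m := by
  rw [← cancel_epi ((p ⊗ₘ p) ⊗ₘ p)]
  calc ((p ⊗ₘ p) ⊗ₘ p) ≫ (m ▷ Q) ≫ m
      = (F ▷ Y) ≫ F ≫ p := by
        rw [← tensorHom_id m Q, tensorHom_comp_tensorHom_assoc, hm, comp_id, tensorHom_def_assoc,
          comp_whiskerRight_assoc, ← tensorHom_def_assoc, hm]
    _ = (α_ Y Y Y).hom ≫ (Y ◁ F) ≫ F ≫ p := by rw [reassoc_of% hF]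
    _ = ((p ⊗ₘ p) ⊗ₘ p) ≫ (α_ Q Q Q).hom ≫ (Q ◁ m) ≫ m := by
        rw [associator_naturality_assoc, ← id_tensorHom Q m, tensorHom_comp_tensorHom_assoc, hm,
          comp_id, tensorHom_def'_assoc, whiskerLeft_comp_assoc, ← tensorHom_def'_assoc, hm]

structure IsTensorStableCoequalizer {X Y Q : C} (f g : X ⟶ Y) (p : Y ⟶ Q) : Prop where
  w : f ≫ p = g ≫ p
  descLeft : ∀ (W : C) {Z : C} (u : W ⊗ Y ⟶ Z),
    (W ◁ f) ≫ u = (W ◁ g) ≫ u → ∃! v : W ⊗ Q ⟶ Z, (W ◁ p) ≫ v = u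
  descRight : ∀ (W : C) {Z : C} (u : Y ⊗ W ⟶ Z),
    (f ▷ W) ≫ u = (g ▷ W) ≫ u → ∃! v : Q ⊗ W ⟶ Z, (p ▷ W) ≫ v = u

namespace IsTensorStableCoequalizer

variable {X Y Q : C} {f g : X ⟶ Y} {p : Y ⟶ Q}

theorem epi_whiskerLeft (hp : IsTensorStableCoequalizer f g p) (W : C) : Epi (W ◁ p) where
  left_cancellation u v huv := by
    obtain ⟨_, -, huniq⟩ := hp.descLeft W ((W ◁ p) ≫ u) (by
      simp only [← whiskerLeft_comp_assoc, hp.w])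
    rw [huniq u rfl, huniq v huv.symm]

theorem epi_whiskerRight (hp : IsTensorStableCoequalizer f g p) (W : C) : Epi (p ▷ W) where
  left_cancellation u v huv := by
    obtain ⟨_, -, huniq⟩ := hp.descRight W ((p ▷ W) ≫ u) (by
      simp only [← comp_whiskerRight_assoc, hp.w])
    rw [huniq u rfl, huniq v huv.symm]

theorem epi_tensorHom (hp : IsTensorStableCoequalizer f g p) : Epi (p ⊗ₘ p) := by
  have := hp.epi_whiskerLeft Q
  have := hp.epi_whiskerRight Y
  rw [tensorHom_def]
  infer_instance

theorem existsUnique_tensorHom_comp_eq (hp : IsTensorStableCoequalizer f g p) {Z : C}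
    (F : Y ⊗ Y ⟶ Z) (hFl : (f ▷ Y) ≫ F = (g ▷ Y) ≫ F) (hFr : (Y ◁ f) ≫ F = (Y ◁ g) ≫ F) :
    ∃! m : Q ⊗ Q ⟶ Z, (p ⊗ₘ p) ≫ m = F := by
  obtain ⟨m₁, hm₁, -⟩ := hp.descRight Y F hFl
  have hm₁r : (Q ◁ f) ≫ m₁ = (Q ◁ g) ≫ m₁ := by
    have := hp.epi_whiskerRight X
    rw [← cancel_epi (p ▷ X), ← whisker_exchange_assoc, ← whisker_exchange_assoc, hm₁, hFr]
  obtain ⟨m, hm, -⟩ := hp.descLeft Q m₁ hm₁r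
  have hpm : (p ⊗ₘ p) ≫ m = F := by rw [tensorHom_def, assoc, hm, hm₁]
  have := hp.epi_tensorHom
  exact ⟨m, hpm, fun m' hm' => (cancel_epi (p ⊗ₘ p)).1 (hm'.trans hpm.symm)⟩

variable [BraidedCategory C]

theorem epi_whiskerLeft_whiskerRight (hp : IsTensorStableCoequalizer f g p) (V W : C) :
    Epi ((V ◁ p) ▷ W) := by
  have := hp.epi_whiskerLeft (W ⊗ V)
  have hbraid : (V ◁ p) ▷ W = (β_ (V ⊗ Y) W).hom ≫ (W ◁ V ◁ p) ≫ (β_ (V ⊗ Q) W).inv := by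
    rw [← BraidedCategory.braiding_naturality_left_assoc, Iso.hom_inv_id, comp_id]
  rw [hbraid, tensor_whiskerLeft_symm]
  infer_instance

theorem epi_tensorHom_tensorHom (hp : IsTensorStableCoequalizer f g p) :
    Epi ((p ⊗ₘ p) ⊗ₘ p) := by
  have := hp.epi_whiskerLeft (Q ⊗ Q)
  have := hp.epi_whiskerRight (Y ⊗ Y)
  have := hp.epi_whiskerLeft_whiskerRight Q Y
  rw [tensorHom_def, tensorHom_def, comp_whiskerRight, whiskerRight_tensor_symm]
  infer_instance

end IsTensorStableCoequalizer

end CategoryTheory.MonoidalCategory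

namespace Herd

variable (h : Herd C)

def pairMul : (h.A ⊗ h.A) ⊗ (h.A ⊗ h.A) ⟶ h.A ⊗ h.A :=
  (α_ h.A h.A (h.A ⊗ h.A)).hom ≫ (h.A ◁ (α_ h.A h.A h.A).inv) ≫
    (α_ h.A (h.A ⊗ h.A) h.A).inv ≫ (h.q ▷ h.A)

theorem herdSigma_whiskerRight_pairMul :
    (herdSigma h ▷ (h.A ⊗ h.A)) ≫ h.pairMul = (herdTau h ▷ (h.A ⊗ h.A)) ≫ h.pairMul :=
  calc _ = 𝟙 _ ⊗≫ ((h.A ◁ h.A ◁ h.del ▷ h.A) ⊗≫ (h.A ◁ h.A ◁ h.q) ≫ h.q) ▷ h.A := by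
        rw [← h.q_assoc]; unfold herdSigma pairMul; monoidal
    _ = 𝟙 _ ⊗≫ ((h.A ◁ h.A ◁ ((h.del ▷ h.A) ≫ (α_ h.A h.A h.A).hom ≫ h.q)) ≫ h.q) ▷ h.A := by
        monoidal
    _ = 𝟙 _ ⊗≫ ((h.A ◁ h.A ◁ ((h.eps ▷ h.A) ≫ (λ_ h.A).hom)) ≫ h.q) ▷ h.A := by
        rw [h.q_unit_left]
    _ = _ := by unfold herdTau pairMul; monoidal

theorem whiskerLeft_herdSigma_pairMul :
    ((h.A ⊗ h.A) ◁ herdSigma h) ≫ h.pairMul = (α_ (h.A ⊗ h.A) h.A (h.A ⊗ h.A)).inv ≫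
      ((α_ h.A h.A h.A).hom ▷ (h.A ⊗ h.A)) ≫ (h.q ▷ (h.A ⊗ h.A)) ≫ herdSigma h :=
  calc _ = 𝟙 _ ⊗≫ (h.A ◁ h.A ◁ h.A ◁ h.A ◁ h.del) ⊗≫ ((h.A ◁ h.A ◁ h.q) ≫ h.q) ▷ h.A := by
        unfold herdSigma pairMul; monoidal
    _ = 𝟙 _ ⊗≫ ((h.A ⊗ h.A ⊗ h.A) ◁ h.A ◁ h.del) ≫ (h.q ▷ (h.A ⊗ h.A ⊗ h.A)) ≫
          (h.A ◁ (α_ h.A h.A h.A).inv) ≫ (α_ h.A (h.A ⊗ h.A) h.A).inv ≫ (h.q ▷ h.A) := by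
        rw [← h.q_assoc]; monoidal
    _ = _ := by rw [whisker_exchange_assoc]; unfold herdSigma; monoidal

theorem whiskerLeft_herdTau_pairMul :
    ((h.A ⊗ h.A) ◁ herdTau h) ≫ h.pairMul = (α_ (h.A ⊗ h.A) h.A (h.A ⊗ h.A)).inv ≫
      ((α_ h.A h.A h.A).hom ▷ (h.A ⊗ h.A)) ≫ (h.q ▷ (h.A ⊗ h.A)) ≫ herdTau h :=
  calc _ = 𝟙 _ ⊗≫ ((h.A ⊗ h.A ⊗ h.A) ◁ h.A ◁ h.eps) ≫ (h.q ▷ (h.A ⊗ 𝟙_ C)) ≫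
          (h.A ◁ (ρ_ h.A).hom) := by
        unfold herdTau pairMul; monoidal
    _ = _ := by rw [whisker_exchange_assoc]; unfold herdTau; monoidal

theorem pairMul_assoc : (h.pairMul ▷ (h.A ⊗ h.A)) ≫ h.pairMul =
    (α_ (h.A ⊗ h.A) (h.A ⊗ h.A) (h.A ⊗ h.A)).hom ≫ ((h.A ⊗ h.A) ◁ h.pairMul) ≫ h.pairMul :=
  calc _ = 𝟙 _ ⊗≫ ((h.A ◁ h.A ◁ h.q) ≫ h.q) ▷ h.A := by
        rw [← h.q_assoc]; unfold pairMul; monoidal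
    _ = _ := by unfold pairMul; monoidal

end Herd

theorem stmt5_general (h : Herd C) (H : C) (ϖ : h.A ⊗ h.A ⟶ H)
    (hcoeq : herdSigma h ≫ ϖ = herdTau h ≫ ϖ)
    (hunivL : ∀ (X : C) {Z : C} (f : X ⊗ (h.A ⊗ h.A) ⟶ Z),
      (X ◁ herdSigma h) ≫ f = (X ◁ herdTau h) ≫ f →
        ∃! g : X ⊗ H ⟶ Z, (X ◁ ϖ) ≫ g = f)
    (hunivR : ∀ (X : C) {Z : C} (f : (h.A ⊗ h.A) ⊗ X ⟶ Z),
      (herdSigma h ▷ X) ≫ f = (herdTau h ▷ X) ≫ f →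
        ∃! g : H ⊗ X ⟶ Z, (ϖ ▷ X) ≫ g = f) :
    ∃ μ : H ⊗ H ⟶ H,
      ((ϖ ⊗ₘ ϖ) ≫ μ =
        (α_ h.A h.A (h.A ⊗ h.A)).hom ≫ (h.A ◁ (α_ h.A h.A h.A).inv) ≫
          (α_ h.A (h.A ⊗ h.A) h.A).inv ≫ (h.q ▷ h.A) ≫ ϖ) ∧
      ((μ ▷ H) ≫ μ = (α_ H H H).hom ≫ (H ◁ μ) ≫ μ) ∧
      (∀ μ' : H ⊗ H ⟶ H,
        (ϖ ⊗ₘ ϖ) ≫ μ' =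
          (α_ h.A h.A (h.A ⊗ h.A)).hom ≫ (h.A ◁ (α_ h.A h.A h.A).inv) ≫
            (α_ h.A (h.A ⊗ h.A) h.A).inv ≫ (h.q ▷ h.A) ≫ ϖ → μ' = μ) := by
  have hϖ : IsTensorStableCoequalizer (herdSigma h) (herdTau h) ϖ := ⟨hcoeq, hunivL, hunivR⟩
  have := hϖ.epi_tensorHom_tensorHom
  have hpairMul : h.pairMul ≫ ϖ = (α_ h.A h.A (h.A ⊗ h.A)).hom ≫ (h.A ◁ (α_ h.A h.A h.A).inv) ≫
      (α_ h.A (h.A ⊗ h.A) h.A).inv ≫ (h.q ▷ h.A) ≫ ϖ := by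
    simp only [Herd.pairMul, assoc]
  obtain ⟨μ, hμ, hμ_unique⟩ := hϖ.existsUnique_tensorHom_comp_eq (h.pairMul ≫ ϖ)
    (by rw [← assoc, h.herdSigma_whiskerRight_pairMul, assoc])
    (by
      simp only [← assoc]
      rw [h.whiskerLeft_herdSigma_pairMul, h.whiskerLeft_herdTau_pairMul]
      simp only [assoc, hcoeq])
  rw [← hpairMul]
  exact ⟨μ, hμ, assoc_of_tensorHom_comp_eq hμ h.pairMul_assoc, hμ_unique⟩

/-- Let `A` be a herd in a braided monoidal category `C` with reflexive
coequalizers preserved by tensoring, and let `ϖ : A ⊗ A ⟶ H` be the coequalizer of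
`σ` and `τ`.  Then there exists a unique morphism `μ : H ⊗ H ⟶ H` such that
`μ ∘ (ϖ ⊗ ϖ) = ϖ ∘ (q ⊗ 1_{A⊗A}) : A⊗⁴ ⟶ H`, and this `μ` is associative
(up to associator). -/
theorem stmt5 (h : Herd C) (H : C) (ϖ : h.A ⊗ h.A ⟶ H)
    (hcoeq : herdSigma h ≫ ϖ = herdTau h ≫ ϖ)
    (huniv : ∀ {Z : C} (f : h.A ⊗ h.A ⟶ Z),
      herdSigma h ≫ f = herdTau h ≫ f → ∃! g : H ⟶ Z, ϖ ≫ g = f)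
    (hunivL : ∀ (X : C) {Z : C} (f : X ⊗ (h.A ⊗ h.A) ⟶ Z),
      (X ◁ herdSigma h) ≫ f = (X ◁ herdTau h) ≫ f →
        ∃! g : X ⊗ H ⟶ Z, (X ◁ ϖ) ≫ g = f)
    (hunivR : ∀ (X : C) {Z : C} (f : (h.A ⊗ h.A) ⊗ X ⟶ Z),
      (herdSigma h ▷ X) ≫ f = (herdTau h ▷ X) ≫ f →
        ∃! g : H ⊗ X ⟶ Z, (ϖ ▷ X) ≫ g = f) :
    ∃ μ : H ⊗ H ⟶ H,
      ((ϖ ⊗ₘ ϖ) ≫ μ =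
        (α_ h.A h.A (h.A ⊗ h.A)).hom ≫ (h.A ◁ (α_ h.A h.A h.A).inv) ≫
          (α_ h.A (h.A ⊗ h.A) h.A).inv ≫ (h.q ▷ h.A) ≫ ϖ) ∧
      ((μ ▷ H) ≫ μ = (α_ H H H).hom ≫ (H ◁ μ) ≫ μ) ∧
      (∀ μ' : H ⊗ H ⟶ H,
        (ϖ ⊗ₘ ϖ) ≫ μ' =
          (α_ h.A h.A (h.A ⊗ h.A)).hom ≫ (h.A ◁ (α_ h.A h.A h.A).inv) ≫
            (α_ h.A (h.A ⊗ h.A) h.A).inv ≫ (h.q ▷ h.A) ≫ ϖ → μ' = μ) :=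
  stmt5_general h H ϖ hcoeq hunivL hunivR
end

section
/- Let A be a herd in a braided monoidal category C with reflexive coequalizers preserved by tensoring, and ϖ : A ⊗ A ⟶ H the coequalizer of σ and τ. Then there is a unique morphism μ_act : H ⊗ A ⟶ A with μ_act ∘ (ϖ ⊗ 1_A) = q : A⊗³ ⟶ A, and the fusion morphism v = (μ_act ⊗ 1_A) ∘ (1_H ⊗ δ) : H ⊗ A ⟶ A ⊗ A is invertible, with inverse (ϖ ⊗ 1_A) ∘ (1_A ⊗ δ) : A ⊗ A ⟶ H ⊗ A. -/
/-!
Para-associativity and the left unit law show that `q` coequalizes `σ ⊗ 1` and `τ ⊗ 1`, so it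
descends along the coequalizer `ϖ ⊗ 1` to the action `μ`. Writing `F f = (f ⊗ 1) ∘ (1 ⊗ δ)`
for `f : X ⊗ A ⟶ Y`, coassociativity gives `F g ∘ F f = F (g ∘ F f)` and the counit law gives
`F (1 ⊗ ε) = 1`. Both `v = F μ` and its candidate inverse `u = F ϖ` are of this form: `v ∘ u`
collapses to `F (q ∘ (1 ⊗ δ)) = F (1 ⊗ ε)` by the right unit law of `q`, while
`u ∘ v ∘ (ϖ ⊗ 1) = F (ϖ ∘ σ) = F (ϖ ∘ τ) = ϖ ⊗ 1` because `F q = σ`, and `ϖ ⊗ 1` is epi.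
-/

open CategoryTheory MonoidalCategory Category

universe v u

variable {C : Type u} [Category.{v} C] [MonoidalCategory C] [BraidedCategory C]

namespace Herd

variable (h : Herd C) {X Y Z : C}

def fusion (f : X ⊗ h.A ⟶ Y) : X ⊗ h.A ⟶ Y ⊗ h.A :=
  (X ◁ h.del) ≫ (α_ X h.A h.A).inv ≫ (f ▷ h.A)

lemma fusion_comp (f : X ⊗ h.A ⟶ Y) (g : Y ⟶ Z) :
    h.fusion (f ≫ g) = h.fusion f ≫ (g ▷ h.A) := by
  simp [fusion]

lemma whiskerRight_comp_fusion (g : X ⟶ Y) (f : Y ⊗ h.A ⟶ Z) :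
    (g ▷ h.A) ≫ h.fusion f = h.fusion ((g ▷ h.A) ≫ f) := by
  simp only [fusion, ← whisker_exchange_assoc, associator_inv_naturality_left_assoc,
    comp_whiskerRight]

lemma fusion_comp_fusion (f : X ⊗ h.A ⟶ Y) (g : Y ⊗ h.A ⟶ Z) :
    h.fusion f ≫ h.fusion g = h.fusion (h.fusion f ≫ g) := by
  have coassoc : (X ◁ h.del) ≫ (α_ X h.A h.A).inv ≫ ((X ⊗ h.A) ◁ h.del) ≫
      (α_ (X ⊗ h.A) h.A h.A).inv =
      (X ◁ h.del) ≫ (α_ X h.A h.A).inv ≫ (((X ◁ h.del) ≫ (α_ X h.A h.A).inv) ▷ h.A) := by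
    rw [← associator_inv_naturality_right_assoc, ← whiskerLeft_comp_assoc, ← h.coassoc]
    monoidal
  simp only [fusion, Category.assoc]
  rw [← whisker_exchange_assoc, associator_inv_naturality_left_assoc, reassoc_of% coassoc]
  simp

lemma fusion_counit : h.fusion ((X ◁ h.eps) ≫ (ρ_ X).hom) = 𝟙 (X ⊗ h.A) := by
  have counit : h.del ≫ (h.eps ▷ h.A) = (λ_ h.A).inv := by
    rw [← cancel_mono (λ_ h.A).hom, Category.assoc, h.counit_left, Iso.inv_hom_id]
  rw [fusion, comp_whiskerRight, ← associator_inv_naturality_middle_assoc,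
    ← whiskerLeft_comp_assoc, counit]
  monoidal

lemma fusion_associator_hom_comp_q :
    h.fusion ((α_ h.A h.A h.A).hom ≫ h.q) = (α_ h.A h.A h.A).hom ≫ herdSigma h := by
  simp [fusion, herdSigma]

lemma associator_hom_comp_herdTau :
    (α_ h.A h.A h.A).hom ≫ herdTau h = ((h.A ⊗ h.A) ◁ h.eps) ≫ (ρ_ (h.A ⊗ h.A)).hom := by
  simp [herdTau]

/-- Para-associativity, then the left unit law:
`q(q(a, b, c₁), c₂, d) = q(a, b, q(c₁, c₂, d)) = ε(c) q(a, b, d)`. -/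
lemma herdSigma_whiskerRight_comp_q :
    (herdSigma h ▷ h.A) ≫ (α_ h.A h.A h.A).hom ≫ h.q
      = (herdTau h ▷ h.A) ≫ (α_ h.A h.A h.A).hom ≫ h.q := by
  have paraAssoc : (h.q ▷ (h.A ⊗ h.A)) ≫ h.q = (α_ h.A (h.A ⊗ h.A) (h.A ⊗ h.A)).hom ≫
      (h.A ◁ (α_ h.A h.A (h.A ⊗ h.A)).hom) ≫ (h.A ◁ h.A ◁ h.q) ≫ h.q := by
    rw [← h.q_assoc]; simp
  calc _ = (α_ h.A (h.A ⊗ h.A) h.A).hom ≫ (h.A ◁ (α_ h.A h.A h.A).hom) ≫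
        (h.A ◁ h.A ◁ ((h.del ▷ h.A) ≫ (α_ h.A h.A h.A).hom ≫ h.q)) ≫ h.q := by
        simp only [herdSigma, comp_whiskerRight, Category.assoc,
          associator_naturality_left_assoc, paraAssoc]
        monoidal
    _ = _ := by
        rw [h.q_unit_left, herdTau]
        monoidal

end Herd

theorem stmt7_general (h : Herd C) (H : C) (ϖ : h.A ⊗ h.A ⟶ H)
    (hcoeq : herdSigma h ≫ ϖ = herdTau h ≫ ϖ)
    (hunivR : ∀ (X : C) {Z : C} (f : (h.A ⊗ h.A) ⊗ X ⟶ Z),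
      (herdSigma h ▷ X) ≫ f = (herdTau h ▷ X) ≫ f →
        ∃! g : H ⊗ X ⟶ Z, (ϖ ▷ X) ≫ g = f) :
    ∃ μact : H ⊗ h.A ⟶ h.A,
      ((α_ h.A h.A h.A).inv ≫ (ϖ ▷ h.A) ≫ μact = h.q) ∧
      (∀ μ' : H ⊗ h.A ⟶ h.A,
        (α_ h.A h.A h.A).inv ≫ (ϖ ▷ h.A) ≫ μ' = h.q → μ' = μact) ∧
      (((H ◁ h.del) ≫ (α_ H h.A h.A).inv ≫ (μact ▷ h.A)) ≫
          ((h.A ◁ h.del) ≫ (α_ h.A h.A h.A).inv ≫ (ϖ ▷ h.A)) = 𝟙 (H ⊗ h.A)) ∧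
      (((h.A ◁ h.del) ≫ (α_ h.A h.A h.A).inv ≫ (ϖ ▷ h.A)) ≫
          ((H ◁ h.del) ≫ (α_ H h.A h.A).inv ≫ (μact ▷ h.A)) = 𝟙 (h.A ⊗ h.A)) := by
  obtain ⟨μ, hμ, hμ_unique⟩ :=
    hunivR h.A ((α_ h.A h.A h.A).hom ≫ h.q) h.herdSigma_whiskerRight_comp_q
  have ϖ_epi {Z : C} (f g : H ⊗ h.A ⟶ Z) (hfg : (ϖ ▷ h.A) ≫ f = (ϖ ▷ h.A) ≫ g) : f = g := by
    obtain ⟨_, -, uniq⟩ :=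
      hunivR h.A ((ϖ ▷ h.A) ≫ g) (by simp only [← comp_whiskerRight_assoc, hcoeq])
    exact (uniq f hfg).trans (uniq g rfl).symm
  have fusion_ϖ_comp_μ : h.fusion ϖ ≫ μ = (h.A ◁ h.eps) ≫ (ρ_ h.A).hom := by
    simp only [Herd.fusion, Category.assoc, hμ, Iso.inv_hom_id_assoc, h.q_unit_right]
  refine ⟨μ, by rw [hμ, Iso.inv_hom_id_assoc], fun μ' hμ' => hμ_unique μ' ?_, ?_, ?_⟩
  · rw [← hμ', Iso.hom_inv_id_assoc]
  · change h.fusion μ ≫ h.fusion ϖ = 𝟙 _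
    apply ϖ_epi
    rw [reassoc_of% h.whiskerRight_comp_fusion, hμ, h.fusion_comp_fusion,
      h.fusion_associator_hom_comp_q, Category.assoc, hcoeq,
      reassoc_of% h.associator_hom_comp_herdTau, ← Category.assoc, h.fusion_comp,
      h.fusion_counit, Category.id_comp, Category.comp_id]
  · change h.fusion ϖ ≫ h.fusion μ = 𝟙 _
    rw [h.fusion_comp_fusion, fusion_ϖ_comp_μ, h.fusion_counit]

/-- Let `A` be a herd in a braided monoidal category `C` with reflexive
coequalizers preserved by tensoring, and `ϖ : A ⊗ A ⟶ H` the coequalizer of `σ`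
and `τ`.  Then there is a unique morphism `μ_act : H ⊗ A ⟶ A` with
`μ_act ∘ (ϖ ⊗ 1_A) = q`, and the fusion morphism
`v = (μ_act ⊗ 1_A) ∘ (1_H ⊗ δ) : H ⊗ A ⟶ A ⊗ A` is invertible with inverse
`(ϖ ⊗ 1_A) ∘ (1_A ⊗ δ) : A ⊗ A ⟶ H ⊗ A`. -/
theorem stmt7 (h : Herd C) (H : C) (ϖ : h.A ⊗ h.A ⟶ H)
    (hcoeq : herdSigma h ≫ ϖ = herdTau h ≫ ϖ)
    (huniv : ∀ {Z : C} (f : h.A ⊗ h.A ⟶ Z),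
      herdSigma h ≫ f = herdTau h ≫ f → ∃! g : H ⟶ Z, ϖ ≫ g = f)
    (hunivL : ∀ (X : C) {Z : C} (f : X ⊗ (h.A ⊗ h.A) ⟶ Z),
      (X ◁ herdSigma h) ≫ f = (X ◁ herdTau h) ≫ f →
        ∃! g : X ⊗ H ⟶ Z, (X ◁ ϖ) ≫ g = f)
    (hunivR : ∀ (X : C) {Z : C} (f : (h.A ⊗ h.A) ⊗ X ⟶ Z),
      (herdSigma h ▷ X) ≫ f = (herdTau h ▷ X) ≫ f →
        ∃! g : H ⊗ X ⟶ Z, (ϖ ▷ X) ≫ g = f) :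
    ∃ μact : H ⊗ h.A ⟶ h.A,
      ((α_ h.A h.A h.A).inv ≫ (ϖ ▷ h.A) ≫ μact = h.q) ∧
      (∀ μ' : H ⊗ h.A ⟶ h.A,
        (α_ h.A h.A h.A).inv ≫ (ϖ ▷ h.A) ≫ μ' = h.q → μ' = μact) ∧
      (((H ◁ h.del) ≫ (α_ H h.A h.A).inv ≫ (μact ▷ h.A)) ≫
          ((h.A ◁ h.del) ≫ (α_ h.A h.A h.A).inv ≫ (ϖ ▷ h.A)) = 𝟙 (H ⊗ h.A)) ∧
      (((h.A ◁ h.del) ≫ (α_ h.A h.A h.A).inv ≫ (ϖ ▷ h.A)) ≫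
          ((H ◁ h.del) ≫ (α_ H h.A h.A).inv ≫ (μact ▷ h.A)) = 𝟙 (h.A ⊗ h.A)) :=
  stmt7_general h H ϖ hcoeq hunivR
end

section
/- Let X and Y be categories and let Adj(X,Y) be the category whose objects are adjunctions F ⊣ F* (F : X ⥤ Y, F* : Y ⥤ X, with unit η_F and counit ε_F) and whose morphisms F ⟶ G are natural transformations F ⟹ G (equivalently, via mates, natural transformations G* ⟹ F*). Define Q(F,G,H) := H ∘ G* ∘ F (with the composite adjunction H G* F ⊣ F* G H*), functorial in the evident way using mates in the contravariant middle variable. Let φ be the canonical (coherence) isomorphism Q(Q(F,G,H),K,L) ≅ Q(F,G,Q(H,K,L)), let α : Q(F,G,G) = G G* F ⟹ F be the whiskering of the counit ε_G with F, and let β : H ⟹ H F* F = Q(F,F,H) be the whiskering of the unit η_F with H. Then (Q, φ, α, β) satisfies the flock axioms (F1), (F2) and (F3). -/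
open CategoryTheory Category

universe v₁ v₂ u₁ u₂

variable {X : Type u₁} [Category.{v₁} X] {Y : Type u₂} [Category.{v₂} Y]

/-- `Q(F,G,H) = H ∘ G* ∘ F` for adjunctions between `X` and `Y` (here `Gs` denotes the
right adjoint `G*` of the middle adjunction). -/
def Qf (F : X ⥤ Y) (Gs : Y ⥤ X) (H : X ⥤ Y) : X ⥤ Y := F ⋙ Gs ⋙ H

/-- The action of `Q` on a morphism of `Adj(X,Y)` in the first (covariant) variable. -/
def Qmap₁ {F F' : X ⥤ Y} (θ : F ⟶ F') (Gs : Y ⥤ X) (H : X ⥤ Y) :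
    Qf F Gs H ⟶ Qf F' Gs H := Functor.whiskerRight θ (Gs ⋙ H)

/-- The action of `Q` on a morphism of `Adj(X,Y)` in the third (covariant) variable. -/
def Qmap₃ (F : X ⥤ Y) (Gs : Y ⥤ X) {H H' : X ⥤ Y} (θ : H ⟶ H') :
    Qf F Gs H ⟶ Qf F Gs H' := Functor.whiskerLeft F (Functor.whiskerLeft Gs θ)

/-- The canonical coherence isomorphism `φ : Q(Q(F,G,H),K,L) ≅ Q(F,G,Q(H,K,L))`
(composition of functors is strictly associative). -/
def Qphi (F : X ⥤ Y) (Gs : Y ⥤ X) (H : X ⥤ Y) (Ks : Y ⥤ X) (L : X ⥤ Y) :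
    Qf (Qf F Gs H) Ks L ≅ Qf F Gs (Qf H Ks L) := Iso.refl _

/-- `α : Q(F,G,G) = G G* F ⟹ F`, the whiskering of the counit `ε_G` with `F`. -/
def Qalpha (F : X ⥤ Y) {G : X ⥤ Y} {Gs : Y ⥤ X} (adjG : G ⊣ Gs) : Qf F Gs G ⟶ F :=
  Functor.whiskerLeft F adjG.counit ≫ F.rightUnitor.hom

/-- `β : H ⟹ H F* F = Q(F,F,H)`, the whiskering of the unit `η_F` with `H`. -/
def Qbeta {F : X ⥤ Y} {Fs : Y ⥤ X} (adjF : F ⊣ Fs) (H : X ⥤ Y) : H ⟶ Qf F Fs H :=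
  H.leftUnitor.inv ≫ Functor.whiskerRight adjF.unit H


/-! Since functor composition is strictly associative, `φ` is an identity and (F1) holds
trivially. Componentwise, (F2) is `H` applied to the triangle identity
`η_{G* b} ≫ G*(ε_b) = 1` and (F3) is the other triangle identity `F(η_a) ≫ ε_{F a} = 1`. -/

theorem Qphi_hom_comp_Qphi_hom (F : X ⥤ Y) (Gs : Y ⥤ X) (H : X ⥤ Y) (Ks : Y ⥤ X) (L : X ⥤ Y)
    (Ms : Y ⥤ X) (N : X ⥤ Y) :
    (Qphi (Qf F Gs H) Ks L Ms N).hom ≫ (Qphi F Gs H Ks (Qf L Ms N)).hom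
      = Qmap₁ (Qphi F Gs H Ks L).hom Ms N ≫ (Qphi F Gs (Qf H Ks L) Ms N).hom ≫
          Qmap₃ F Gs (Qphi H Ks L Ms N).hom := by
  ext x
  simp [Qphi, Qmap₁, Qmap₃, Qf]

theorem Qmap₃_Qbeta_comp_Qphi_inv_comp_Qmap₁_Qalpha (F : X ⥤ Y) {G : X ⥤ Y} {Gs : Y ⥤ X}
    (adj : G ⊣ Gs) (H : X ⥤ Y) :
    Qmap₃ F Gs (Qbeta adj H) ≫ (Qphi F Gs G Gs H).inv ≫ Qmap₁ (Qalpha F adj) Gs H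
      = 𝟙 (Qf F Gs H) := by
  ext x
  simp [Qmap₁, Qmap₃, Qphi, Qalpha, Qbeta, Qf, ← H.map_comp, adj.right_triangle_components]

theorem Qbeta_comp_Qalpha {F : X ⥤ Y} {Fs : Y ⥤ X} (adj : F ⊣ Fs) :
    Qbeta adj F ≫ Qalpha F adj = 𝟙 F := by
  ext x
  simp [Qalpha, Qbeta, Qf, adj.left_triangle_components]

theorem stmt10_general
    (F₁ F₂ F₃ F₅ F₇ : X ⥤ Y) (G₁ G₂ G₄ G₆ : Y ⥤ X)
    (a₁ : F₁ ⊣ G₁) (a₂ : F₂ ⊣ G₂) :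
    -- (F1)
    ((Qphi (Qf F₁ G₂ F₃) G₄ F₅ G₆ F₇).hom ≫ (Qphi F₁ G₂ F₃ G₄ (Qf F₅ G₆ F₇)).hom
      = Qmap₁ (Qphi F₁ G₂ F₃ G₄ F₅).hom G₆ F₇ ≫
          (Qphi F₁ G₂ (Qf F₃ G₄ F₅) G₆ F₇).hom ≫
          Qmap₃ F₁ G₂ (Qphi F₃ G₄ F₅ G₆ F₇).hom) ∧
    -- (F2)
    (Qmap₃ F₁ G₂ (Qbeta a₂ F₃) ≫ (Qphi F₁ G₂ F₂ G₂ F₃).inv ≫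
        Qmap₁ (Qalpha F₁ a₂) G₂ F₃ = 𝟙 (Qf F₁ G₂ F₃)) ∧
    -- (F3)
    (Qbeta a₁ F₁ ≫ Qalpha F₁ a₁ = 𝟙 F₁) :=
  ⟨Qphi_hom_comp_Qphi_hom F₁ G₂ F₃ G₄ F₅ G₆ F₇,
    Qmap₃_Qbeta_comp_Qphi_inv_comp_Qmap₁_Qalpha F₁ a₂ F₃, Qbeta_comp_Qalpha a₁⟩

/-- With `Q(F,G,H) := H ∘ G* ∘ F` on the category `Adj(X,Y)` of
adjunctions, `φ` the canonical coherence isomorphism, `α` the whiskering of the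
counit and `β` the whiskering of the unit, the flock axioms (F1), (F2), (F3) hold. -/
theorem stmt10
    (F₁ F₂ F₃ F₄ F₅ F₆ F₇ : X ⥤ Y) (G₁ G₂ G₃ G₄ G₅ G₆ G₇ : Y ⥤ X)
    (a₁ : F₁ ⊣ G₁) (a₂ : F₂ ⊣ G₂) (a₃ : F₃ ⊣ G₃) (a₄ : F₄ ⊣ G₄)
    (a₅ : F₅ ⊣ G₅) (a₆ : F₆ ⊣ G₆) (a₇ : F₇ ⊣ G₇) :
    -- (F1)
    ((Qphi (Qf F₁ G₂ F₃) G₄ F₅ G₆ F₇).hom ≫ (Qphi F₁ G₂ F₃ G₄ (Qf F₅ G₆ F₇)).hom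
      = Qmap₁ (Qphi F₁ G₂ F₃ G₄ F₅).hom G₆ F₇ ≫
          (Qphi F₁ G₂ (Qf F₃ G₄ F₅) G₆ F₇).hom ≫
          Qmap₃ F₁ G₂ (Qphi F₃ G₄ F₅ G₆ F₇).hom) ∧
    -- (F2)
    (Qmap₃ F₁ G₂ (Qbeta a₂ F₃) ≫ (Qphi F₁ G₂ F₂ G₂ F₃).inv ≫
        Qmap₁ (Qalpha F₁ a₂) G₂ F₃ = 𝟙 (Qf F₁ G₂ F₃)) ∧
    -- (F3)
    (Qbeta a₁ F₁ ≫ Qalpha F₁ a₁ = 𝟙 F₁) :=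
  stmt10_general F₁ F₂ F₃ F₅ F₇ G₁ G₂ G₄ G₆ a₁ a₂
end

section
/- Let A be a herd in a braided monoidal category C, and let L, M be right A-comodules with M having a dual. Equip Q(L,M,M) = L ⊗ M* ⊗ M with the right A-comodule structure ρ_Q. Then α := (1_L ⊗ ev_M) composed with the unitor : L ⊗ M* ⊗ M ⟶ L is a morphism of right A-comodules: ρ_L ∘ α = (α ⊗ 1_A) ∘ ρ_Q. -/
/-!
Write `c := (1 ⊗ ev) ∘ (1 ⊗ ρ_M) : M* ⊗ M ⟶ A` for the coefficient map of `M`. Contracting the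
second pair `M* ⊗ M` with `ev` makes all the braidings in `ρ_Q` collapse, so that
`(α ⊗ 1) ∘ ρ_Q = (1 ⊗ q ∘ (1 ⊗ (c ⊗ c) ∘ (1 ⊗ coev ⊗ 1))) ∘ (ρ_L ⊗ 1)`. Coassociativity of `ρ_M`
and the snake identity give `(c ⊗ c) ∘ (1 ⊗ coev ⊗ 1) = δ ∘ c`; the unit law
`q ∘ (1 ⊗ δ) = 1 ⊗ ε` then leaves `(1 ⊗ ε ∘ c) ∘ (ρ_L ⊗ 1)`, and `ε ∘ c = ev` is the counit
law of `M`.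
-/

open CategoryTheory MonoidalCategory Category

universe v u

variable {C : Type u} [Category.{v} C] [MonoidalCategory C] [BraidedCategory C]

set_option maxHeartbeats 1000000 in
/-- The right `A`-comodule structure on `Q(L,M,N) = L ⊗ M* ⊗ N` induced by a herd
structure `q` on `A`. -/
def rhoQ (h : Herd C) (L M N Ms : C)
    (ρL : L ⟶ L ⊗ h.A) (ρM : M ⟶ M ⊗ h.A) (ρN : N ⟶ N ⊗ h.A)
    (ev : Ms ⊗ M ⟶ 𝟙_ C) (coev : 𝟙_ C ⟶ M ⊗ Ms) :
    L ⊗ Ms ⊗ N ⟶ (L ⊗ Ms ⊗ N) ⊗ h.A :=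
  (L ◁ (Ms ◁ ((λ_ N).inv ≫ (coev ▷ N) ≫ (α_ M Ms N).hom))) ≫
  (ρL ⊗ₘ (𝟙 Ms ⊗ₘ (ρM ⊗ₘ (𝟙 Ms ⊗ₘ ρN)))) ≫
  ((L ⊗ h.A) ◁ ((α_ Ms (M ⊗ h.A) (Ms ⊗ (N ⊗ h.A))).inv ≫
    (((α_ Ms M h.A).inv ≫ (ev ▷ h.A) ≫ (λ_ h.A).hom) ▷ (Ms ⊗ (N ⊗ h.A))))) ≫
  (α_ L h.A (h.A ⊗ (Ms ⊗ (N ⊗ h.A)))).hom ≫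
  (L ◁ (h.A ◁ swap3 h.A Ms (N ⊗ h.A))) ≫
  (L ◁ swap3 h.A Ms (h.A ⊗ (N ⊗ h.A))) ≫
  (L ◁ (Ms ◁ (h.A ◁ swap3 h.A N h.A))) ≫
  (L ◁ (Ms ◁ swap3 h.A N (h.A ⊗ h.A))) ≫
  (L ◁ (α_ Ms N (h.A ⊗ h.A ⊗ h.A)).inv) ≫
  (α_ L (Ms ⊗ N) (h.A ⊗ h.A ⊗ h.A)).inv ≫
  ((L ⊗ Ms ⊗ N) ◁ h.q)


section Duality

omit [BraidedCategory C]

variable {A M Ms : C}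

def insertCoev (coev : 𝟙_ C ⟶ M ⊗ Ms) (X : C) : X ⟶ M ⊗ Ms ⊗ X :=
  (λ_ X).inv ≫ (coev ▷ X) ≫ (α_ M Ms X).hom

def contractEv (ev : Ms ⊗ M ⟶ 𝟙_ C) (W : C) : Ms ⊗ M ⊗ W ⟶ W :=
  (α_ Ms M W).inv ≫ (ev ▷ W) ≫ (λ_ W).hom

lemma insertCoev_naturality (coev : 𝟙_ C ⟶ M ⊗ Ms) {X Y : C} (f : X ⟶ Y) :
    insertCoev coev X ≫ (M ◁ Ms ◁ f) = f ≫ insertCoev coev Y := by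
  simp only [insertCoev, assoc]
  rw [← associator_naturality_right, ← whisker_exchange_assoc,
    ← leftUnitor_inv_naturality_assoc]

lemma contractEv_naturality (ev : Ms ⊗ M ⟶ 𝟙_ C) {X Y : C} (f : X ⟶ Y) :
    (Ms ◁ M ◁ f) ≫ contractEv ev Y = contractEv ev X ≫ f := by
  simp only [contractEv, assoc]
  rw [associator_inv_naturality_right_assoc, whisker_exchange_assoc, leftUnitor_naturality]

lemma insertCoev_comp_whiskerLeft_contractEv (ev : Ms ⊗ M ⟶ 𝟙_ C) (coev : 𝟙_ C ⟶ M ⊗ Ms)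
    (hsnake : (λ_ M).inv ≫ (coev ▷ M) ≫ (α_ M Ms M).hom ≫ (M ◁ ev) ≫ (ρ_ M).hom = 𝟙 M)
    (W : C) : insertCoev coev (M ⊗ W) ≫ (M ◁ contractEv ev W) = 𝟙 (M ⊗ W) := by
  calc insertCoev coev (M ⊗ W) ≫ (M ◁ contractEv ev W)
      = ((λ_ M).inv ≫ (coev ▷ M) ≫ (α_ M Ms M).hom ≫ (M ◁ ev) ≫ (ρ_ M).hom) ▷ W := by
        simp only [insertCoev, contractEv, comp_whiskerRight, whiskerLeft_comp, assoc]
        monoidal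
    _ = 𝟙 (M ⊗ W) := by rw [hsnake, id_whiskerRight]

def comoduleCoeff (ρM : M ⟶ M ⊗ A) (ev : Ms ⊗ M ⟶ 𝟙_ C) : Ms ⊗ M ⟶ A :=
  (Ms ◁ ρM) ≫ contractEv ev A

variable (ρM : M ⟶ M ⊗ A) (ev : Ms ⊗ M ⟶ 𝟙_ C)

lemma comoduleCoeff_comp_counit (eps : A ⟶ 𝟙_ C)
    (hM : ρM ≫ (M ◁ eps) ≫ (ρ_ M).hom = 𝟙 M) :
    comoduleCoeff ρM ev ≫ eps = ev := by
  have hM' : ρM ≫ (M ◁ eps) = (ρ_ M).inv := by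
    rw [← cancel_mono (ρ_ M).hom]; simpa using hM
  rw [comoduleCoeff, assoc, ← contractEv_naturality, ← whiskerLeft_comp_assoc, hM']
  simp only [contractEv]
  monoidal

lemma insertCoev_comp_whiskerLeft_comoduleCoeff (coev : 𝟙_ C ⟶ M ⊗ Ms)
    (hsnake : (λ_ M).inv ≫ (coev ▷ M) ≫ (α_ M Ms M).hom ≫ (M ◁ ev) ≫ (ρ_ M).hom = 𝟙 M) :
    insertCoev coev M ≫ (M ◁ comoduleCoeff ρM ev) = ρM := by
  rw [comoduleCoeff, whiskerLeft_comp, reassoc_of% insertCoev_naturality,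
    insertCoev_comp_whiskerLeft_contractEv ev coev hsnake, comp_id]

lemma comoduleCoeff_comp_comul (coev : 𝟙_ C ⟶ M ⊗ Ms) (del : A ⟶ A ⊗ A)
    (hM : ρM ≫ (ρM ▷ A) ≫ (α_ M A A).hom = ρM ≫ (M ◁ del))
    (hsnake : (λ_ M).inv ≫ (coev ▷ M) ≫ (α_ M Ms M).hom ≫ (M ◁ ev) ≫ (ρ_ M).hom = 𝟙 M) :
    (Ms ◁ insertCoev coev M) ≫ (α_ Ms M (Ms ⊗ M)).inv ≫
      (comoduleCoeff ρM ev ⊗ₘ comoduleCoeff ρM ev) = comoduleCoeff ρM ev ≫ del := by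
  have hM' : ρM ≫ (ρM ▷ A) = ρM ≫ (M ◁ del) ≫ (α_ M A A).inv := by
    rw [← cancel_mono (α_ M A A).hom]; simpa using hM
  calc (Ms ◁ insertCoev coev M) ≫ (α_ Ms M (Ms ⊗ M)).inv ≫
        (comoduleCoeff ρM ev ⊗ₘ comoduleCoeff ρM ev)
      = (Ms ◁ (insertCoev coev M ≫ (M ◁ comoduleCoeff ρM ev))) ≫ (α_ Ms M A).inv ≫
          (comoduleCoeff ρM ev ▷ A) := by
        rw [tensorHom_def', ← associator_inv_naturality_right_assoc, ← whiskerLeft_comp_assoc]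
    _ = (Ms ◁ (ρM ≫ (ρM ▷ A))) ≫ (α_ Ms (M ⊗ A) A).inv ≫ (contractEv ev A ▷ A) := by
        rw [insertCoev_comp_whiskerLeft_comoduleCoeff ρM ev coev hsnake, comoduleCoeff,
          comp_whiskerRight, ← associator_inv_naturality_middle_assoc, ← whiskerLeft_comp_assoc]
    _ = (Ms ◁ ρM) ≫ (Ms ◁ M ◁ del) ≫ contractEv ev (A ⊗ A) := by
        rw [hM']
        simp only [contractEv, whiskerLeft_comp, comp_whiskerRight, assoc]
        monoidal
    _ = comoduleCoeff ρM ev ≫ del := by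
        rw [contractEv_naturality, comoduleCoeff, assoc]

end Duality

section Braiding

variable {M Ms : C}

lemma swap3_naturality (X Y : C) {Z Z' : C} (g : Z ⟶ Z') :
    (X ◁ Y ◁ g) ≫ swap3 X Y Z' = swap3 X Y Z ≫ (Y ◁ X ◁ g) := by
  simp only [swap3, assoc]
  rw [associator_inv_naturality_right_assoc, whisker_exchange_assoc, associator_naturality_right]

lemma braid_past_contractEv (ev : Ms ⊗ M ⟶ 𝟙_ C) (X W : C) :
    swap3 X Ms (M ⊗ W) ≫ (Ms ◁ swap3 X M W) ≫ contractEv ev (X ⊗ W) =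
      X ◁ contractEv ev W := by
  -- by naturality, braiding `X` past `Ms ⊗ M` and then applying `ev` is braiding with `𝟙_ C`
  calc swap3 X Ms (M ⊗ W) ≫ (Ms ◁ swap3 X M W) ≫ contractEv ev (X ⊗ W)
      = (X ◁ (α_ Ms M W).inv) ≫ (α_ X (Ms ⊗ M) W).inv ≫
          (((β_ X (Ms ⊗ M)).hom ≫ (ev ▷ X)) ▷ W) ≫ ((λ_ X).hom ▷ W) := by
        simp only [swap3, contractEv, comp_whiskerRight,
          BraidedCategory.braiding_tensor_right_hom, assoc]
        monoidal
    _ = (X ◁ (α_ Ms M W).inv) ≫ (α_ X (Ms ⊗ M) W).inv ≫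
          (((X ◁ ev) ≫ (β_ X (𝟙_ C)).hom) ▷ W) ≫ ((λ_ X).hom ▷ W) := by
        rw [BraidedCategory.braiding_naturality_right]
    _ = X ◁ contractEv ev W := by
        rw [braiding_tensorUnit_right]
        simp only [contractEv, comp_whiskerRight, assoc]
        monoidal

lemma braid_two_past_contractEv (ev : Ms ⊗ M ⟶ 𝟙_ C) (X Y Z : C) :
    (X ◁ swap3 Y Ms (M ⊗ Z)) ≫ swap3 X Ms (Y ⊗ M ⊗ Z) ≫ (Ms ◁ X ◁ swap3 Y M Z) ≫
      (Ms ◁ swap3 X M (Y ⊗ Z)) ≫ contractEv ev (X ⊗ Y ⊗ Z) = X ◁ Y ◁ contractEv ev Z := by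
  rw [← reassoc_of% swap3_naturality, braid_past_contractEv, ← whiskerLeft_comp_assoc,
    ← whiskerLeft_comp, assoc, braid_past_contractEv]

end Braiding

lemma rhoQ_comp_whiskerRight_ev (h : Herd C) (L M Ms : C) (ρL : L ⟶ L ⊗ h.A)
    (ρM : M ⟶ M ⊗ h.A) (ev : Ms ⊗ M ⟶ 𝟙_ C) (coev : 𝟙_ C ⟶ M ⊗ Ms) :
    rhoQ h L M M Ms ρL ρM ρM ev coev ≫ (((L ◁ ev) ≫ (ρ_ L).hom) ▷ h.A) =
      (ρL ▷ (Ms ⊗ M)) ≫ (α_ L h.A (Ms ⊗ M)).hom ≫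
        (L ◁ h.A ◁ ((Ms ◁ insertCoev coev M) ≫ (α_ Ms M (Ms ⊗ M)).inv ≫
          (comoduleCoeff ρM ev ⊗ₘ comoduleCoeff ρM ev))) ≫ (L ◁ h.q) := by
  have contract_last : (L ◁ (α_ Ms M (h.A ⊗ h.A ⊗ h.A)).inv) ≫
      (α_ L (Ms ⊗ M) (h.A ⊗ h.A ⊗ h.A)).inv ≫
      (((L ◁ ev) ≫ (ρ_ L).hom) ▷ (h.A ⊗ h.A ⊗ h.A)) =
      L ◁ contractEv ev (h.A ⊗ h.A ⊗ h.A) := by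
    simp only [contractEv, comp_whiskerRight, whiskerLeft_comp]
    monoidal
  have contract_pairs : (𝟙 Ms ⊗ₘ ρM ⊗ₘ 𝟙 Ms ⊗ₘ ρM) ≫ (α_ Ms (M ⊗ h.A) (Ms ⊗ M ⊗ h.A)).inv ≫
      (contractEv ev h.A ▷ (Ms ⊗ M ⊗ h.A)) ≫ (h.A ◁ contractEv ev h.A) =
      (α_ Ms M (Ms ⊗ M)).inv ≫ (comoduleCoeff ρM ev ⊗ₘ comoduleCoeff ρM ev) := by
    rw [associator_inv_naturality_assoc, ← MonoidalCategory.tensorHom_def,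
      tensorHom_comp_tensorHom, id_tensorHom, comoduleCoeff]
  simp only [rhoQ, assoc]
  rw [whisker_exchange ((L ◁ ev) ≫ (ρ_ L).hom) h.q, reassoc_of% contract_last]
  simp only [← whiskerLeft_comp]
  rw [reassoc_of% (braid_two_past_contractEv ev h.A h.A h.A), MonoidalCategory.tensorHom_def,
    assoc, whisker_exchange_assoc]
  simp only [← whiskerLeft_comp_assoc]
  rw [associator_naturality_right_assoc, ← contract_pairs]
  simp only [insertCoev, contractEv, whiskerLeft_comp, assoc]

theorem stmt14_general (h : Herd C) (L M Ms : C)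
    (ρL : L ⟶ L ⊗ h.A) (ρM : M ⟶ M ⊗ h.A)
    (ev : Ms ⊗ M ⟶ 𝟙_ C) (coev : 𝟙_ C ⟶ M ⊗ Ms)
    (hM₁ : ρM ≫ (ρM ▷ h.A) ≫ (α_ M h.A h.A).hom = ρM ≫ (M ◁ h.del))
    (hM₂ : ρM ≫ (M ◁ h.eps) ≫ (ρ_ M).hom = 𝟙 M)
    (hsnake₁ : (λ_ M).inv ≫ (coev ▷ M) ≫ (α_ M Ms M).hom ≫ (M ◁ ev) ≫ (ρ_ M).hom
      = 𝟙 M) :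
    rhoQ h L M M Ms ρL ρM ρM ev coev ≫ (((L ◁ ev) ≫ (ρ_ L).hom) ▷ h.A)
      = ((L ◁ ev) ≫ (ρ_ L).hom) ≫ ρL := by
  have unit_law : (h.A ◁ (comoduleCoeff ρM ev ≫ h.del)) ≫ h.q = (h.A ◁ ev) ≫ (ρ_ h.A).hom := by
    rw [whiskerLeft_comp_assoc, h.q_unit_right, ← whiskerLeft_comp_assoc,
      comoduleCoeff_comp_counit ρM ev h.eps hM₂]
  rw [rhoQ_comp_whiskerRight_ev, comoduleCoeff_comp_comul ρM ev coev h.del hM₁ hsnake₁,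
    ← whiskerLeft_comp, unit_law, whiskerLeft_comp, ← associator_naturality_right_assoc,
    ← whisker_exchange_assoc]
  monoidal

set_option maxHeartbeats 1000000 in
/-- Let `A` be a herd in a braided monoidal category `C`, and let
`L, M` be right `A`-comodules with `M` having a dual.  Equip
`Q(L,M,M) = L ⊗ M* ⊗ M` with the comodule structure `ρ_Q`.  Then
`α := (1_L ⊗ ev_M)` composed with the unitor is a morphism of right `A`-comodules:
`ρ_L ∘ α = (α ⊗ 1_A) ∘ ρ_Q`. -/
theorem stmt14 (h : Herd C) (L M Ms : C)
    (ρL : L ⟶ L ⊗ h.A) (ρM : M ⟶ M ⊗ h.A)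
    (ev : Ms ⊗ M ⟶ 𝟙_ C) (coev : 𝟙_ C ⟶ M ⊗ Ms)
    (hL₁ : ρL ≫ (ρL ▷ h.A) ≫ (α_ L h.A h.A).hom = ρL ≫ (L ◁ h.del))
    (hL₂ : ρL ≫ (L ◁ h.eps) ≫ (ρ_ L).hom = 𝟙 L)
    (hM₁ : ρM ≫ (ρM ▷ h.A) ≫ (α_ M h.A h.A).hom = ρM ≫ (M ◁ h.del))
    (hM₂ : ρM ≫ (M ◁ h.eps) ≫ (ρ_ M).hom = 𝟙 M)
    (hsnake₁ : (λ_ M).inv ≫ (coev ▷ M) ≫ (α_ M Ms M).hom ≫ (M ◁ ev) ≫ (ρ_ M).hom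
      = 𝟙 M)
    (hsnake₂ : (ρ_ Ms).inv ≫ (Ms ◁ coev) ≫ (α_ Ms M Ms).inv ≫ (ev ▷ Ms) ≫
      (λ_ Ms).hom = 𝟙 Ms) :
    rhoQ h L M M Ms ρL ρM ρM ev coev ≫ (((L ◁ ev) ≫ (ρ_ L).hom) ▷ h.A)
      = ((L ◁ ev) ≫ (ρ_ L).hom) ≫ ρL :=
  stmt14_general h L M Ms ρL ρM ev coev hM₁ hM₂ hsnake₁
end

section
/- Let H be a bimonoid in a braided monoidal category C whose fusion morphism v = (μ ⊗ 1) ∘ (1 ⊗ δ) : H ⊗ H ⟶ H ⊗ H is invertible with inverse v̄. Then the following four identities hold (suppressing associators and unitors): (i) v̄ ∘ (μ ⊗ 1) = (μ ⊗ 1) ∘ (1 ⊗ v̄) : H ⊗ H ⊗ H ⟶ H ⊗ H; (ii) v̄ ∘ δ = η ⊗ 1 : H ⟶ H ⊗ H; (iii) (v̄ ⊗ 1) ∘ (1 ⊗ δ) = (1 ⊗ δ) ∘ v̄ : H ⊗ H ⟶ H ⊗ H ⊗ H; (iv) μ ∘ v̄ = 1 ⊗ ε : H ⊗ H ⟶ H.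 -/
open CategoryTheory MonoidalCategory Category

universe v u

variable {C : Type u} [Category.{v} C] [MonoidalCategory C] [BraidedCategory C]

/-- A bimonoid in a braided monoidal category `C`: a monoid and a comonoid structure
on the same object such that the comultiplication and the counit are monoid
morphisms (using the braiding). -/
structure Bimon' (C : Type u) [Category.{v} C] [MonoidalCategory C] [BraidedCategory C] where
  H : C
  mul : H ⊗ H ⟶ H
  one : 𝟙_ C ⟶ H
  mul_assoc : (mul ▷ H) ≫ mul = (α_ H H H).hom ≫ (H ◁ mul) ≫ mul
  one_mul : (one ▷ H) ≫ mul = (λ_ H).hom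
  mul_one : (H ◁ one) ≫ mul = (ρ_ H).hom
  del : H ⟶ H ⊗ H
  eps : H ⟶ 𝟙_ C
  coassoc : del ≫ (del ▷ H) ≫ (α_ H H H).hom = del ≫ (H ◁ del)
  counit_left : del ≫ (eps ▷ H) ≫ (λ_ H).hom = 𝟙 H
  counit_right : del ≫ (H ◁ eps) ≫ (ρ_ H).hom = 𝟙 H
  compat_del_mul : mul ≫ del =
    (del ⊗ₘ del) ≫ (α_ H H (H ⊗ H)).hom ≫ (H ◁ swap3 H H H) ≫
      (α_ H H (H ⊗ H)).inv ≫ (mul ⊗ₘ mul)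
  compat_del_one : one ≫ del = (λ_ (𝟙_ C)).inv ≫ (one ⊗ₘ one)
  compat_eps_mul : mul ≫ eps = (eps ⊗ₘ eps) ≫ (λ_ (𝟙_ C)).hom
  compat_eps_one : one ≫ eps = 𝟙 (𝟙_ C)

/-- The fusion morphism `v = (μ ⊗ 1) ∘ (1 ⊗ δ) : H ⊗ H ⟶ H ⊗ H` of a bimonoid. -/
def fusion (b : Bimon' C) : b.H ⊗ b.H ⟶ b.H ⊗ b.H :=
  (b.H ◁ b.del) ≫ (α_ b.H b.H b.H).inv ≫ (b.mul ▷ b.H)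

/-!
Each identity for `v̄` is the inverse of an identity for `v` itself, and those follow from a
single (co)monoid axiom: associativity of `μ`, the unit law of `η`, coassociativity of `δ`
and the counit law of `ε` respectively.
-/

namespace Bimon'

variable (b : Bimon' C)

lemma whiskerLeft_fusion_comp_mul_whiskerRight :
    (b.H ◁ fusion b) ≫ (α_ b.H b.H b.H).inv ≫ (b.mul ▷ b.H)
      = (α_ b.H b.H b.H).inv ≫ (b.mul ▷ b.H) ≫ fusion b := by
  unfold fusion
  slice_rhs 2 3 => rw [← whisker_exchange]
  slice_rhs 1 2 => rw [← associator_inv_naturality_right]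
  slice_rhs 3 4 => rw [associator_inv_naturality_left]
  slice_rhs 4 5 => rw [← comp_whiskerRight, b.mul_assoc]
  simp only [MonoidalCategory.whiskerLeft_comp, comp_whiskerRight, assoc]
  slice_lhs 3 4 => rw [associator_inv_naturality_middle]
  simp only [assoc]
  monoidal

lemma one_whiskerRight_comp_fusion :
    (λ_ b.H).inv ≫ (b.one ▷ b.H) ≫ fusion b = b.del := by
  unfold fusion
  slice_lhs 2 3 => rw [← whisker_exchange]
  slice_lhs 1 2 => rw [← leftUnitor_inv_naturality]
  slice_lhs 3 4 => rw [associator_inv_naturality_left]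
  slice_lhs 4 5 => rw [← comp_whiskerRight, b.one_mul]
  simp

lemma whiskerLeft_del_comp_fusion_whiskerRight :
    (b.H ◁ b.del) ≫ (α_ b.H b.H b.H).inv ≫ (fusion b ▷ b.H)
      = fusion b ≫ (b.H ◁ b.del) ≫ (α_ b.H b.H b.H).inv := by
  unfold fusion
  slice_rhs 3 4 => rw [← whisker_exchange]
  slice_rhs 2 3 => rw [← associator_inv_naturality_right]
  slice_rhs 4 5 => rw [associator_inv_naturality_left]
  slice_rhs 1 2 => rw [← MonoidalCategory.whiskerLeft_comp, ← b.coassoc]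
  simp only [MonoidalCategory.whiskerLeft_comp, comp_whiskerRight, assoc]
  slice_lhs 2 3 => rw [← associator_inv_naturality_middle]
  simp only [assoc]
  monoidal

lemma fusion_comp_whiskerLeft_eps :
    fusion b ≫ (b.H ◁ b.eps) ≫ (ρ_ b.H).hom = b.mul := by
  unfold fusion
  slice_lhs 3 4 => rw [← whisker_exchange]
  slice_lhs 2 3 => rw [← associator_inv_naturality_right]
  slice_lhs 4 5 => rw [rightUnitor_naturality]
  rw [rightUnitor_tensor_hom]
  simp only [assoc, Iso.inv_hom_id_assoc]
  rw [← MonoidalCategory.whiskerLeft_comp_assoc, ← MonoidalCategory.whiskerLeft_comp_assoc,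
    assoc, b.counit_right, MonoidalCategory.whiskerLeft_id, id_comp]

variable {b} (v : b.H ⊗ b.H ≅ b.H ⊗ b.H) (hv : v.hom = fusion b)
include hv

lemma mul_whiskerRight_comp_fusion_inv :
    (α_ b.H b.H b.H).inv ≫ (b.mul ▷ b.H) ≫ v.inv
      = (b.H ◁ v.inv) ≫ (α_ b.H b.H b.H).inv ≫ (b.mul ▷ b.H) := by
  rw [← assoc, Iso.comp_inv_eq, assoc, assoc, hv, ← whiskerLeft_fusion_comp_mul_whiskerRight, ← hv,
    whiskerLeft_inv_hom_assoc]

lemma del_comp_fusion_inv : b.del ≫ v.inv = (λ_ b.H).inv ≫ (b.one ▷ b.H) := by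
  rw [Iso.comp_inv_eq, assoc, hv, one_whiskerRight_comp_fusion]

lemma whiskerLeft_del_comp_fusion_inv_whiskerRight :
    (b.H ◁ b.del) ≫ (α_ b.H b.H b.H).inv ≫ (v.inv ▷ b.H)
      = v.inv ≫ (b.H ◁ b.del) ≫ (α_ b.H b.H b.H).inv := by
  rw [Iso.eq_inv_comp, hv, ← reassoc_of% whiskerLeft_del_comp_fusion_whiskerRight, ← hv,
    hom_inv_whiskerRight, comp_id]

lemma fusion_inv_comp_mul : v.inv ≫ b.mul = (b.H ◁ b.eps) ≫ (ρ_ b.H).hom := by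
  rw [Iso.inv_comp_eq, hv, fusion_comp_whiskerLeft_eps]

end Bimon'

/-- Let `H` be a bimonoid in a braided monoidal category `C` whose
fusion morphism `v = (μ ⊗ 1) ∘ (1 ⊗ δ)` is invertible with inverse `v̄`.  Then
(suppressing associators and unitors):
(i)   `v̄ ∘ (μ ⊗ 1) = (μ ⊗ 1) ∘ (1 ⊗ v̄)`;
(ii)  `v̄ ∘ δ = η ⊗ 1`;
(iii) `(v̄ ⊗ 1) ∘ (1 ⊗ δ) = (1 ⊗ δ) ∘ v̄`;
(iv)  `μ ∘ v̄ = 1 ⊗ ε`. -/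
theorem stmt18 (b : Bimon' C) (vbar : b.H ⊗ b.H ⟶ b.H ⊗ b.H)
    (h1 : fusion b ≫ vbar = 𝟙 (b.H ⊗ b.H))
    (h2 : vbar ≫ fusion b = 𝟙 (b.H ⊗ b.H)) :
    ((α_ b.H b.H b.H).inv ≫ (b.mul ▷ b.H) ≫ vbar
        = (b.H ◁ vbar) ≫ (α_ b.H b.H b.H).inv ≫ (b.mul ▷ b.H)) ∧
    (b.del ≫ vbar = (λ_ b.H).inv ≫ (b.one ▷ b.H)) ∧
    ((b.H ◁ b.del) ≫ (α_ b.H b.H b.H).inv ≫ (vbar ▷ b.H)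
        = vbar ≫ (b.H ◁ b.del) ≫ (α_ b.H b.H b.H).inv) ∧
    (vbar ≫ b.mul = (b.H ◁ b.eps) ≫ (ρ_ b.H).hom) := by
  let v : b.H ⊗ b.H ≅ b.H ⊗ b.H := ⟨fusion b, vbar, h1, h2⟩
  exact ⟨Bimon'.mul_whiskerRight_comp_fusion_inv v rfl, Bimon'.del_comp_fusion_inv v rfl,
    Bimon'.whiskerLeft_del_comp_fusion_inv_whiskerRight v rfl, Bimon'.fusion_inv_comp_mul v rfl⟩
end
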